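/- For every natural number r there exists a finite simple graph G with at least one edge such that ivs_χ(G) > r · vs_χ(G). -/

import Mathlib

open SimpleGraph

/-- The chromatic number of a graph, as a natural number (for finite graphs this
is the usual chromatic number). -/
noncomputable def chromNum {V : Type*} (G : SimpleGraph V) : ℕ :=
  sInf {n : ℕ | G.Colorable n}

/-- The maximum degree Δ(G) of a finite graph. -/
noncomputable def maxDeg {V : Type*} [Fintype V] (G : SimpleGraph V) : ℕ :=
  Finset.univ.sup fun v => Nat.card (G.neighborSet v)

/-- The chromatic vertex stability number: the minimum number of vertices whose
deletion results in a graph with chromatic number χ(G) − 1. -/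
noncomputable def vsChi {V : Type*} [Fintype V] (G : SimpleGraph V) : ℕ :=
  sInf {k : ℕ | ∃ S : Finset V, S.card = k ∧
    chromNum (G.induce ((S : Set V))ᶜ) = chromNum G - 1}

/-- The independent chromatic vertex stability number: the minimum size of an
independent set of vertices whose deletion results in a graph with chromatic
number χ(G) − 1. -/
noncomputable def ivsChi {V : Type*} [Fintype V] (G : SimpleGraph V) : ℕ :=
  sInf {k : ℕ | ∃ S : Finset V, S.card = k ∧
    (∀ u ∈ S, ∀ v ∈ S, ¬ G.Adj u v) ∧
    chromNum (G.induce ((S : Set V))ᶜ) = chromNum G - 1}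

/-- The chromatic edge stability number: the minimum number of edges whose
deletion results in a graph with chromatic number χ(G) − 1. -/
noncomputable def esChi {V : Type*} (G : SimpleGraph V) : ℕ :=
  sInf {k : ℕ | ∃ F : Finset (Sym2 V), ↑F ⊆ G.edgeSet ∧ F.card = k ∧
    chromNum (G.deleteEdges ↑F) = chromNum G - 1}

/-! Blow up every vertex of the double star with centres `0`, `1` and `m` leaves at each centre
into an edge. Every edge of the double star becomes a `K₄`, so the chromatic number is `4`, and
deleting one vertex from each of the two centre pairs already leaves a `3`-colourable graph.
An independent set meets at most one of the two completely joined centre pairs, so the other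
centre pair survives whole; to destroy the `K₄`s through it the set must meet each of the `m`
leaf pairs at that centre. With `m = 2r + 1` this gives `ivs_χ ≥ 2r + 1 > r · 2 ≥ r · vs_χ`. -/

open Finset

section chromNum

variable {V : Type*} {G : SimpleGraph V}

lemma chromNum_eq_succ {k : ℕ} (h : G.Colorable (k + 1)) (h' : ¬ G.Colorable k) :
    chromNum G = k + 1 :=
  (Nat.sInf_upward_closed_eq_succ_iff (fun _ _ hmn hm => Colorable.mono hmn hm) k).2 ⟨h, h'⟩

lemma colorable_chromNum [Finite V] : G.Colorable (chromNum G) := by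
  have := Fintype.ofFinite V
  exact Nat.sInf_mem (s := {n | G.Colorable n}) ⟨_, G.colorable_of_fintype⟩

lemma exists_mem_of_colorable_induce_compl {S : Set V} {t : Finset V} {k : ℕ}
    (hc : (G.induce Sᶜ).Colorable k) (ht : G.IsNClique (k + 1) t) : ∃ v ∈ t, v ∈ S := by
  by_contra! h
  exact (cliqueFree_induce_iff _ _ _).1 (hc.cliqueFree k.lt_succ_self) (fun v hv => h v hv) ht

end chromNum

/-- The lexicographic product `T[K₂]` restricted to the vertices `0, …, n - 1` of `T`: vertex
`v` lies in the copy of `K₂` that replaces `v / 2`. -/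
def pairBlowup (n : ℕ) (T : SimpleGraph ℕ) : SimpleGraph (Fin (2 * n)) where
  Adj v w := v ≠ w ∧ ((v : ℕ) / 2 = w / 2 ∨ T.Adj (v / 2) (w / 2))
  symm := ⟨fun _ _ h => ⟨h.1.symm, h.2.imp Eq.symm Adj.symm⟩⟩
  loopless := ⟨fun _ h => h.1 rfl⟩

namespace pairBlowup

variable {n : ℕ} {T : SimpleGraph ℕ}

@[simp]
lemma adj_iff {v w : Fin (2 * n)} :
    (pairBlowup n T).Adj v w ↔ v ≠ w ∧ ((v : ℕ) / 2 = w / 2 ∨ T.Adj (v / 2) (w / 2)) :=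
  Iff.rfl

lemma adj_of_adj {i j : ℕ} (hij : T.Adj i j) {u w : Fin (2 * n)} (hu : (u : ℕ) / 2 = i)
    (hw : (w : ℕ) / 2 = j) : (pairBlowup n T).Adj u w :=
  ⟨fun h => hij.ne (by rw [← hu, ← hw, h]), Or.inr (hu ▸ hw ▸ hij)⟩

lemma isNClique_three {i j : ℕ} (hij : T.Adj i j) {u w w' : Fin (2 * n)} (hu : (u : ℕ) / 2 = i)
    (hw : (w : ℕ) / 2 = j) (hw' : (w' : ℕ) / 2 = j) (hww' : w ≠ w') :
    (pairBlowup n T).IsNClique 3 {u, w, w'} :=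
  is3Clique_triple_iff.2
    ⟨adj_of_adj hij hu hw, adj_of_adj hij hu hw', hww', Or.inl (hw.trans hw'.symm)⟩

lemma isNClique_four {i j : ℕ} (hij : T.Adj i j) {u u' w w' : Fin (2 * n)}
    (hu : (u : ℕ) / 2 = i) (hu' : (u' : ℕ) / 2 = i) (hw : (w : ℕ) / 2 = j)
    (hw' : (w' : ℕ) / 2 = j) (huu' : u ≠ u') (hww' : w ≠ w') :
    (pairBlowup n T).IsNClique 4 {u, u', w, w'} := by
  refine (isNClique_three hij hu' hw hw' hww').insert ?_
  simp only [mem_insert, mem_singleton, forall_eq_or_imp, forall_eq]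
  exact ⟨⟨huu', Or.inl (hu.trans hu'.symm)⟩, adj_of_adj hij hu hw, adj_of_adj hij hu hw'⟩

lemma colorable {k : ℕ} (h : T.Colorable k) : (pairBlowup n T).Colorable (k * 2) := by
  obtain ⟨c⟩ := h
  refine (Coloring.mk (fun v : Fin (2 * n) => (c ((v : ℕ) / 2), decide ((v : ℕ) % 2 = 0)))
    ?_).colorable.mono (by simp)
  rintro v w ⟨hvw, hpair | hT⟩ heq
  · simp only [Prod.mk.injEq, decide_eq_decide] at heq
    exact hvw (Fin.ext (by omega))
  · exact c.valid hT (congrArg Prod.fst heq)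

lemma colorable_induce_compl {k : ℕ} (h : T.Colorable k) {K : Set ℕ}
    (hK : ∀ i j, T.Adj i j → i ∈ K ∨ j ∈ K) {S : Set (Fin (2 * n))}
    (hS : ∀ v : Fin (2 * n), (v : ℕ) / 2 ∈ K → (v : ℕ) % 2 = 0 → v ∈ S) :
    ((pairBlowup n T).induce Sᶜ).Colorable (k + 1) := by
  classical
  obtain ⟨c⟩ := h
  -- A halved pair `i ∈ K` keeps the colour of `i`; a whole pair `j ∉ K`, all of whose
  -- neighbours lie in `K`, gets the colour of `j` and one new colour.
  refine (Coloring.mk (fun v : ↥Sᶜ =>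
    if (v : ℕ) / 2 ∈ K ∨ (v : ℕ) % 2 = 0 then some (c ((v : ℕ) / 2)) else none) ?_).colorable.mono
    (by simp)
  rintro ⟨v, hv⟩ ⟨w, hw⟩ hvw
  obtain ⟨hvw, hpair | hT⟩ : (pairBlowup n T).Adj v w := hvw
  · have hpar : (v : ℕ) % 2 ≠ w % 2 := fun h => hvw (Fin.ext (by omega))
    by_cases hp : (v : ℕ) / 2 ∈ K
    · have hv2 : (v : ℕ) % 2 ≠ 0 := fun h => hv (hS v hp h)
      have hw2 : (w : ℕ) % 2 ≠ 0 := fun h => hw (hS w (hpair ▸ hp) h)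
      omega
    · simp only [← hpair, hp, false_or]
      split_ifs <;> simp <;> omega
  · have := c.valid hT
    rcases hK _ _ hT with hK' | hK' <;> split_ifs <;> simp_all

lemma exists_indep_chromNum_induce_compl_eq_three (c : T.Coloring Bool) {i j : ℕ}
    (hij : T.Adj i j) (hi : i < n) (hj : j < n) :
    ∃ S : Finset (Fin (2 * n)), (∀ u ∈ S, ∀ v ∈ S, ¬ (pairBlowup n T).Adj u v) ∧
      chromNum ((pairBlowup n T).induce (S : Set (Fin (2 * n)))ᶜ) = 3 := by
  wlog hci : c i = false generalizing i j
  · exact this hij.symm hj hi (by simpa [hci] using (c.valid hij).symm)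
  have hcj : c j = true := by simpa [hci] using (c.valid hij).symm
  refine ⟨univ.filter fun v => c ((v : ℕ) / 2) = false ∧ (v : ℕ) % 2 = 0, ?_, ?_⟩
  · simp only [mem_filter, mem_univ, true_and, adj_iff]
    rintro u ⟨hu, hu2⟩ v ⟨hv, hv2⟩ ⟨huv, hpair | hT⟩
    · exact huv (Fin.ext (by omega))
    · exact c.valid hT (hu.trans hv.symm)
  refine chromNum_eq_succ ?_ fun hc => ?_
  · simpa using colorable_induce_compl c.colorable (K := {p | c p = false})
      (fun p q hpq => by have := c.valid hpq; cases hp : c p <;> simp_all)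
      (fun _ h₁ h₂ => by simp_all)
  · obtain ⟨v, hv, hvS⟩ := exists_mem_of_colorable_induce_compl hc
      (isNClique_three hij (u := ⟨2 * i + 1, by omega⟩) (w := ⟨2 * j, by omega⟩)
        (w' := ⟨2 * j + 1, by omega⟩) (by dsimp only; omega) (by dsimp only; omega)
        (by dsimp only; omega) (by simp))
    simp only [mem_insert, mem_singleton] at hv
    simp only [coe_filter, mem_univ, true_and, Set.mem_ofPred_eq] at hvS
    rcases hv with rfl | rfl | rfl <;> simp_all

lemma card_le_card_of_colorable_induce_compl {S : Finset (Fin (2 * n))}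
    (hc : ((pairBlowup n T).induce (S : Set (Fin (2 * n)))ᶜ).Colorable 3) {i : ℕ} (hi : i < n)
    (hiS : ∀ v ∈ S, (v : ℕ) / 2 ≠ i) {L : Finset ℕ} (hL : ∀ j ∈ L, j < n ∧ T.Adj i j) :
    #L ≤ #S := by
  refine card_le_card_of_surjOn (fun v : Fin (2 * n) => (v : ℕ) / 2) fun j hj => ?_
  obtain ⟨hjn, hij⟩ := hL j hj
  obtain ⟨v, hv, hvS⟩ := exists_mem_of_colorable_induce_compl hc
    (isNClique_four hij (u := ⟨2 * i, by omega⟩) (u' := ⟨2 * i + 1, by omega⟩)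
      (w := ⟨2 * j, by omega⟩) (w' := ⟨2 * j + 1, by omega⟩)
      (by simp) (by dsimp only; omega) (by simp) (by dsimp only; omega) (by simp) (by simp))
  refine ⟨v, hvS, ?_⟩
  simp only [mem_insert, mem_singleton] at hv
  rcases hv with rfl | rfl | rfl | rfl
  · simpa using hiS _ hvS
  · exact absurd (by dsimp only; omega) (hiS _ hvS)
  · simp
  · simp; omega

end pairBlowup

def doubleStar (m : ℕ) : SimpleGraph ℕ :=
  fromRel fun i j =>
    (i = 0 ∧ j = 1) ∨ (i = 0 ∧ 2 ≤ j ∧ j < m + 2) ∨ (i = 1 ∧ m + 2 ≤ j ∧ j < 2 * m + 2)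

namespace doubleStar

variable {m : ℕ}

lemma adj_zero_one : (doubleStar m).Adj 0 1 := by simp [doubleStar]

def coloring (m : ℕ) : (doubleStar m).Coloring Bool :=
  Coloring.mk (fun i => decide (i = 1 ∨ (2 ≤ i ∧ i < m + 2))) fun {i j} h => by
    simp only [doubleStar, fromRel_adj] at h
    simp only [ne_eq, decide_eq_decide]
    omega

abbrev blowup (m : ℕ) : SimpleGraph (Fin (2 * (2 * m + 2))) :=
  pairBlowup (2 * m + 2) (doubleStar m)

lemma chromNum_blowup : chromNum (blowup m) = 4 :=
  chromNum_eq_succ (by simpa using pairBlowup.colorable (n := 2 * m + 2) (coloring m).colorable)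
    fun h => h.cliqueFree (by norm_num) _ <| pairBlowup.isNClique_four adj_zero_one
      (u := ⟨0, by omega⟩) (u' := ⟨1, by omega⟩) (w := ⟨2, by omega⟩) (w' := ⟨3, by omega⟩)
      (by simp) (by simp) (by simp) (by simp) (by simp) (by simp)

lemma vsChi_blowup_le_two (hm : 0 < m) : vsChi (blowup m) ≤ 2 := by
  let S : Finset (Fin (2 * (2 * m + 2))) := {⟨0, by omega⟩, ⟨2, by omega⟩}
  have hcover : ∀ i j, (doubleStar m).Adj i j → i ∈ ({0, 1} : Set ℕ) ∨ j ∈ ({0, 1} : Set ℕ) := by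
    intro i j h
    simp only [doubleStar, fromRel_adj] at h
    simp only [Set.mem_insert_iff, Set.mem_singleton_iff]
    omega
  have hS : ∀ v : Fin (2 * (2 * m + 2)), (v : ℕ) / 2 ∈ ({0, 1} : Set ℕ) → (v : ℕ) % 2 = 0 →
      v ∈ (S : Set (Fin (2 * (2 * m + 2)))) := by
    intro v hv hv2
    simp only [Set.mem_insert_iff, Set.mem_singleton_iff] at hv
    simp only [S, coe_insert, coe_singleton, Set.mem_insert_iff, Set.mem_singleton_iff, Fin.ext_iff]
    omega
  refine Nat.sInf_le ⟨S, card_pair (by simp [Fin.ext_iff]), ?_⟩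
  rw [chromNum_blowup]
  refine chromNum_eq_succ (pairBlowup.colorable_induce_compl (coloring m).colorable hcover hS)
    fun hc => ?_
  obtain ⟨v, hv, hvS⟩ := exists_mem_of_colorable_induce_compl hc
    (pairBlowup.isNClique_three (i := 0) (j := 2) (by simp [doubleStar]; omega)
      (u := ⟨1, by omega⟩) (w := ⟨4, by omega⟩) (w' := ⟨5, by omega⟩)
      (by simp) (by simp) (by simp) (by simp))
  simp only [mem_insert, mem_singleton] at hv
  rcases hv with rfl | rfl | rfl <;> simp [S] at hvS

lemma le_card_of_colorable_induce_compl {S : Finset (Fin (2 * (2 * m + 2)))}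
    (hc : ((blowup m).induce (S : Set (Fin (2 * (2 * m + 2))))ᶜ).Colorable 3) {i : ℕ}
    (hi : i < 2) (hiS : ∀ v ∈ S, (v : ℕ) / 2 ≠ i) : m ≤ #S := by
  simpa using pairBlowup.card_le_card_of_colorable_induce_compl hc (by omega) hiS
    (L := Ico (2 + i * m) (2 + i * m + m))
    (fun j hj => by interval_cases i <;> simp [doubleStar] at hj ⊢ <;> omega)

lemma le_ivsChi_blowup : m ≤ ivsChi (blowup m) := by
  obtain ⟨S₀, hS₀, hχS₀⟩ := pairBlowup.exists_indep_chromNum_induce_compl_eq_three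
    (n := 2 * m + 2) (coloring m) adj_zero_one (by omega) (by omega)
  refine le_csInf ⟨_, S₀, rfl, hS₀, by rw [chromNum_blowup, hχS₀]⟩ ?_
  rintro _ ⟨S, rfl, hS, hχS⟩
  rw [chromNum_blowup] at hχS
  have hc := hχS ▸ colorable_chromNum
  by_cases h0 : ∀ v ∈ S, (v : ℕ) / 2 ≠ 0
  · exact le_card_of_colorable_induce_compl hc (i := 0) (by omega) h0
  · push Not at h0
    obtain ⟨u, huS, hu⟩ := h0
    exact le_card_of_colorable_induce_compl hc (i := 1) (by omega) fun v hv hv1 =>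
      hS u huS v hv (pairBlowup.adj_of_adj adj_zero_one hu hv1)

end doubleStar

theorem stmt_9 (r : ℕ) :
    ∃ (n : ℕ) (G : SimpleGraph (Fin n)),
      G.edgeSet.Nonempty ∧ ivsChi G > r * vsChi G := by
  refine ⟨_, doubleStar.blowup (2 * r + 1),
    ⟨s(⟨0, by omega⟩, ⟨1, by omega⟩), by simp, Or.inl (by simp)⟩, ?_⟩
  calc r * vsChi _ ≤ r * 2 := Nat.mul_le_mul_left r (doubleStar.vsChi_blowup_le_two (by omega))
    _ < 2 * r + 1 := by omega
    _ ≤ ivsChi _ := doubleStar.le_ivsChi_blowup
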